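/- Let γ be real, let L_0 be the ℂ-linear endomorphism of the space of 3×3 complex matrices given by L_0(ρ) := γ·(E_{02} ρ E_{20} − (1/2)(E_{22} ρ + ρ E_{22})), and let P be the ℂ-linear endomorphism given by P(ρ) := (ρ_{00}+ρ_{22}) E_{00} + ρ_{01} E_{01} + ρ_{10} E_{10} + ρ_{11} E_{11}. Then for every t ∈ ℝ one has P∘exp(−t L_0) = P and exp(t L_0)∘P = P. -/

import Mathlib

/-!
The generator `L₀` only transfers population from level 2 to level 0, and `P` adds the
population of level 2 to that of level 0, so `P ∘ L₀ = 0`; and `P` lands in matrices supported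
on the `{0, 1}` block, on which `L₀` vanishes, so `L₀ ∘ P = 0`. In a Banach algebra `p x = 0`
kills every term of the exponential series of `x` after the first, whence `p exp x = p`, and
symmetrically `x p = 0` gives `exp x * p = p`.
-/

attribute [local instance] Matrix.linftyOpNormedAddCommGroup Matrix.linftyOpNormedSpace

/-- The standard matrix unit `E_{ij}` (a `1` in row `i`, column `j`). -/
noncomputable def matUnit (i j : Fin 3) : Matrix (Fin 3) (Fin 3) ℂ :=
  Matrix.single i j 1

/-- Port helper: the ring of continuous ℂ-linear endomorphisms of the matrices is a topological
ring (the instance is no longer found automatically through the local norm instances). -/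
instance matCLM_isTopologicalRing :
    IsTopologicalRing (Matrix (Fin 3) (Fin 3) ℂ →L[ℂ] Matrix (Fin 3) (Fin 3) ℂ) :=
  @NonUnitalSeminormedRing.toIsTopologicalRing _
    (ContinuousLinearMap.toSeminormedRing (𝕜 := ℂ)
      (E := Matrix (Fin 3) (Fin 3) ℂ)).toNonUnitalSeminormedRing

section BanachAlgebra

variable {A : Type*} [NormedRing A] [CompleteSpace A]

theorem mul_exp_eq_self_of_mul_eq_zero (𝕂 : Type*) [RCLike 𝕂] [NormedAlgebra 𝕂 A] {p x : A}
    (h : p * x = 0) : p * NormedSpace.exp x = p := by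
  have hs := (NormedSpace.exp_series_hasSum_exp' (𝕂 := 𝕂) x).mul_left p
  refine (hs.unique (hasSum_single 0 fun n hn => ?_)).trans (by simp)
  obtain ⟨m, rfl⟩ := Nat.exists_eq_succ_of_ne_zero hn
  rw [pow_succ', mul_smul_comm, ← mul_assoc, h, zero_mul, smul_zero]

theorem exp_mul_eq_self_of_mul_eq_zero (𝕂 : Type*) [RCLike 𝕂] [NormedAlgebra 𝕂 A] {p x : A}
    (h : x * p = 0) : NormedSpace.exp x * p = p := by
  have hs := (NormedSpace.exp_series_hasSum_exp' (𝕂 := 𝕂) x).mul_right p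
  refine (hs.unique (hasSum_single 0 fun n hn => ?_)).trans (by simp)
  obtain ⟨m, rfl⟩ := Nat.exists_eq_succ_of_ne_zero hn
  rw [pow_succ, smul_mul_assoc, mul_assoc, h, mul_zero, smul_zero]

end BanachAlgebra

-- Operator versions: stated for `E →L[𝕜] E` so that the normed-ring structure is found by
-- unification rather than instance search, which fails for the matrix norm used here.
section Operator

variable {𝕜 E : Type*} [RCLike 𝕜] [NormedAddCommGroup E] [NormedSpace 𝕜 E] [CompleteSpace E]

theorem ContinuousLinearMap.mul_exp_eq_self_of_mul_eq_zero {p x : E →L[𝕜] E} (h : p * x = 0) :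
    p * NormedSpace.exp x = p :=
  _root_.mul_exp_eq_self_of_mul_eq_zero 𝕜 h

theorem ContinuousLinearMap.exp_mul_eq_self_of_mul_eq_zero {p x : E →L[𝕜] E} (h : x * p = 0) :
    NormedSpace.exp x * p = p :=
  _root_.exp_mul_eq_self_of_mul_eq_zero 𝕜 h

end Operator

section ThreeLevelModel

noncomputable def threeLevelGenerator (γ : ℂ) (ρ : Matrix (Fin 3) (Fin 3) ℂ) :
    Matrix (Fin 3) (Fin 3) ℂ :=
  γ • (matUnit 0 2 * ρ * matUnit 2 0 - (1 / 2 : ℂ) • (matUnit 2 2 * ρ + ρ * matUnit 2 2))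

noncomputable def relaxationProjection (ρ : Matrix (Fin 3) (Fin 3) ℂ) :
    Matrix (Fin 3) (Fin 3) ℂ :=
  (ρ 0 0 + ρ 2 2) • matUnit 0 0 + ρ 0 1 • matUnit 0 1 + ρ 1 0 • matUnit 1 0 +
    ρ 1 1 • matUnit 1 1

theorem threeLevelGenerator_eq_zero {γ : ℂ} {ρ : Matrix (Fin 3) (Fin 3) ℂ}
    (hrow : ∀ j, ρ 2 j = 0) (hcol : ∀ i, ρ i 2 = 0) : threeLevelGenerator γ ρ = 0 := by
  ext i j
  fin_cases i <;> fin_cases j <;>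
    simp [threeLevelGenerator, matUnit, Matrix.mul_apply, Fin.sum_univ_three, hrow, hcol]

theorem relaxationProjection_apply_two_left (ρ : Matrix (Fin 3) (Fin 3) ℂ) (j : Fin 3) :
    relaxationProjection ρ 2 j = 0 := by
  fin_cases j <;> simp [relaxationProjection, matUnit]

theorem relaxationProjection_apply_two_right (ρ : Matrix (Fin 3) (Fin 3) ℂ) (i : Fin 3) :
    relaxationProjection ρ i 2 = 0 := by
  fin_cases i <;> simp [relaxationProjection, matUnit]

theorem threeLevelGenerator_relaxationProjection (γ : ℂ) (ρ : Matrix (Fin 3) (Fin 3) ℂ) :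
    threeLevelGenerator γ (relaxationProjection ρ) = 0 :=
  threeLevelGenerator_eq_zero (relaxationProjection_apply_two_left ρ)
    (relaxationProjection_apply_two_right ρ)

theorem relaxationProjection_threeLevelGenerator (γ : ℂ) (ρ : Matrix (Fin 3) (Fin 3) ℂ) :
    relaxationProjection (threeLevelGenerator γ ρ) = 0 := by
  ext i j
  fin_cases i <;> fin_cases j <;>
    simp [threeLevelGenerator, relaxationProjection, matUnit, Matrix.mul_apply,
      Fin.sum_univ_three]
  ring

end ThreeLevelModel

/-- for the three-level model generator `L_0` and the projector `P` one has
`P ∘ exp(-t L_0) = P` and `exp(t L_0) ∘ P = P` for every `t`. -/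
theorem stmt15 (γ : ℝ)
    (L₀ P : Matrix (Fin 3) (Fin 3) ℂ →L[ℂ] Matrix (Fin 3) (Fin 3) ℂ)
    (hL₀ : ∀ ρ, L₀ ρ = (γ : ℂ) •
      (matUnit 0 2 * ρ * matUnit 2 0 -
        (1 / 2 : ℂ) • (matUnit 2 2 * ρ + ρ * matUnit 2 2)))
    (hP : ∀ ρ, P ρ = (ρ 0 0 + ρ 2 2) • matUnit 0 0 + ρ 0 1 • matUnit 0 1 +
      ρ 1 0 • matUnit 1 0 + ρ 1 1 • matUnit 1 1) :
    ∀ t : ℝ, P * NormedSpace.exp ((-t) • L₀) = P ∧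
      NormedSpace.exp (t • L₀) * P = P := by
  have hPL : ∀ ρ, P (L₀ ρ) = 0 := fun ρ => by
    rw [hL₀, hP]
    exact relaxationProjection_threeLevelGenerator γ ρ
  have hLP : ∀ ρ, L₀ (P ρ) = 0 := fun ρ => by
    rw [hP, hL₀]
    exact threeLevelGenerator_relaxationProjection γ ρ
  intro t
  have hPtL : P * ((-t) • L₀) = 0 := by
    ext1 ρ
    simp [ContinuousLinearMap.map_smul_of_tower, hPL]
  have htLP : (t • L₀) * P = 0 := by
    ext1 ρ
    simp [hLP]
  exact ⟨ContinuousLinearMap.mul_exp_eq_self_of_mul_eq_zero hPtL,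
    ContinuousLinearMap.exp_mul_eq_self_of_mul_eq_zero htLP⟩
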